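/- Let z ∈ ℂ∖{0} and let α, β, F, G, H : ℤ → ℂ satisfy the stationary zero-curvature relations at z, with F(n) ≠ 0 for all n. Let w ∈ ℂ satisfy w² = G(n)² − F(n)H(n) for all n, define φ(n) := (w + G(n))/F(n), and assume φ(n) ≠ 0 and z + α(n)φ(n−1) ≠ 0 for all n. Fix n₀ ∈ ℤ and define ψ₁(n) := Π_{n'=n₀+1}^{n} (z + α(n')φ(n'−1)) for n ≥ n₀+1, ψ₁(n₀) := 1, ψ₁(n) := Π_{n'=n+1}^{n₀} (z + α(n')φ(n'−1))^{−1} for n ≤ n₀−1, and ψ₂(n) := φ(n₀)·Π_{n'=n₀+1}^{n} (zβ(n')φ(n'−1)^{−1} + 1) for n ≥ n₀+1, ψ₂(n₀) := φ(n₀), ψ₂(n) := φ(n₀)·Π_{n'=n+1}^{n₀} (zβ(n')φ(n'−1)^{−1} + 1)^{−1} for n ≤ n₀−1. Then: (i) ψ₂(n) = φ(n)ψ₁(n) for all n; (ii) with U(z,n) = [[z, α(n)], [β(n)z, 1]], one has U(z,n)·(ψ₁(n−1), ψ₂(n−1))ᵀ = (ψ₁(n), ψ₂(n))ᵀ; (iii)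 with V(n) = i·[[G(n−1), −F(n−1)], [H(n−1), −G(n−1)]], one has V(n)·(ψ₁(n−1), ψ₂(n−1))ᵀ = −i w·(ψ₁(n−1), ψ₂(n−1))ᵀ. -/

import Mathlib

/-- The meromorphic function `φ(n) = (w + G(n))/F(n)`. -/
noncomputable def phiP (F G : ℤ → ℂ) (w : ℂ) (n : ℤ) : ℂ := (w + G n) / F n

/-- `prodZ f n₀ n = Π_{n'=n₀+1}^{n} f(n')` for `n ≥ n₀`, `= 1` for `n = n₀`, and
`= (Π_{n'=n+1}^{n₀} f(n'))⁻¹` for `n ≤ n₀ − 1`. -/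
noncomputable def prodZ (f : ℤ → ℂ) (n₀ n : ℤ) : ℂ :=
  if n₀ ≤ n then ∏ k ∈ Finset.Icc (n₀ + 1) n, f k
  else (∏ k ∈ Finset.Icc (n + 1) n₀, f k)⁻¹

/-- The first component of the Baker–Akhiezer vector. -/
noncomputable def psi1 (α F G : ℤ → ℂ) (w z : ℂ) (n₀ n : ℤ) : ℂ :=
  prodZ (fun n' => z + α n' * phiP F G w (n' - 1)) n₀ n

/-- The second component of the Baker–Akhiezer vector. -/
noncomputable def psi2 (α β F G : ℤ → ℂ) (w z : ℂ) (n₀ n : ℤ) : ℂ :=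
  phiP F G w n₀ * prodZ (fun n' => z * β n' * (phiP F G w (n' - 1))⁻¹ + 1) n₀ n

/-!
With `φ = (w + G)/F`, the second and third zero-curvature relations together with
`w² = G² − F H` say exactly that `φ` solves the discrete Riccati equation
`z β(n) + φ(n−1) = φ(n) (z + α(n) φ(n−1))`. Hence `φ ψ₁` obeys the same first-order recurrence
as `ψ₂` and agrees with it at `n₀`, so `ψ₂ = φ ψ₁`; the `U`-relation is the Riccati equation
once more. Since `H = (G − w) φ`, the vector `(1, φ(m))ᵀ` is an eigenvector of
`[[G, −F], [H, −G]](m)` with eigenvalue `−w`, which is the `V`-relation.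
-/

lemma prodZ_eq_mul (f : ℤ → ℂ) (n₀ n : ℤ) (hf : f n ≠ 0) :
    prodZ f n₀ n = prodZ f n₀ (n - 1) * f n := by
  unfold prodZ
  rcases lt_trichotomy n n₀ with h | rfl | h
  · rw [if_neg (by omega), if_neg (by omega),
      show Finset.Icc (n - 1 + 1) n₀ = insert n (Finset.Icc (n + 1) n₀) by
        ext x; simp only [Finset.mem_Icc, Finset.mem_insert]; omega,
      Finset.prod_insert (by simp), mul_inv, mul_comm (f n)⁻¹, inv_mul_cancel_right₀ hf]
  · rw [if_pos le_rfl, if_neg (by omega), Finset.Icc_eq_empty (by omega), sub_add_cancel,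
      Finset.Icc_self, Finset.prod_empty, Finset.prod_singleton, inv_mul_cancel₀ hf]
  · rw [if_pos (by omega), if_pos (by omega),
      show Finset.Icc (n₀ + 1) n = insert n (Finset.Icc (n₀ + 1) (n - 1)) by
        ext x; simp only [Finset.mem_Icc, Finset.mem_insert]; omega,
      Finset.prod_insert (by simp), mul_comm]

lemma eq_of_eq_mul_recurrence {M : Type*} [MonoidWithZero M] [IsCancelMulZero M] {u v g : ℤ → M}
    (hg : ∀ n, g n ≠ 0) (hu : ∀ n, u n = u (n - 1) * g n) (hv : ∀ n, v n = v (n - 1) * g n)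
    (n₀ : ℤ) (h₀ : u n₀ = v n₀) : u = v := by
  funext n
  induction n using Int.inductionOn' (b := n₀) with
  | zero => exact h₀
  | succ k _ ih => rw [hu, hv, add_sub_cancel_right, ih]
  | pred k _ ih =>
    refine mul_right_cancel₀ (hg k) ?_
    rw [← hu, ← hv, ih]

section Riccati

variable {α β F G H : ℤ → ℂ} {w z : ℂ}

lemma mul_phiP {m : ℤ} (hF : F m ≠ 0) : F m * phiP F G w m = w + G m := by
  rw [phiP, mul_div_cancel₀ _ hF]

lemma eq_sub_mul_phiP {m : ℤ} (hF : F m ≠ 0) (hw : w ^ 2 = G m ^ 2 - F m * H m) :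
    H m = (G m - w) * phiP F G w m := by
  apply mul_left_cancel₀ hF
  linear_combination -(G m - w) * mul_phiP (G := G) (w := w) hF + hw

lemma phiP_riccati {n : ℤ} (hFn : F n ≠ 0) (hFn' : F (n - 1) ≠ 0)
    (h2 : z * β n * F (n - 1) + α n * H n - G n + G (n - 1) = 0)
    (h3 : -F n + z * F (n - 1) + α n * (G n + G (n - 1)) = 0)
    (hw : w ^ 2 = G n ^ 2 - F n * H n) :
    z * β n + phiP F G w (n - 1) = phiP F G w n * (z + α n * phiP F G w (n - 1)) := by
  apply mul_left_cancel₀ (mul_ne_zero hFn hFn')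
  linear_combination F n * h2 - (w + G n) * h3 - α n * hw
    + (F n - α n * (w + G n)) * mul_phiP (G := G) (w := w) hFn'
    - (z * F (n - 1) + α n * (F (n - 1) * phiP F G w (n - 1))) * mul_phiP (G := G) (w := w) hFn

lemma mulVec_eigenvector_phiP {m : ℤ} (hF : F m ≠ 0) (hw : w ^ 2 = G m ^ 2 - F m * H m)
    (x : ℂ) :
    Matrix.mulVec (Complex.I • !![G m, -(F m); H m, -(G m)]) ![x, phiP F G w m * x]
      = (-(Complex.I * w)) • ![x, phiP F G w m * x] := by
  rw [Matrix.mulVec_fin_two, Matrix.smul_vec2]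
  simp only [Matrix.smul_apply, Matrix.of_apply, Matrix.cons_val', Matrix.cons_val_zero,
    Matrix.cons_val_one, Matrix.empty_val', Matrix.cons_val_fin_one, smul_eq_mul]
  refine Matrix.vec2_eq ?_ ?_
  · linear_combination (-Complex.I * x) * mul_phiP (G := G) (w := w) hF
  · rw [eq_sub_mul_phiP hF hw]
    ring

end Riccati

theorem baker_akhiezer_properties_general (z : ℂ) (α β F G H : ℤ → ℂ)
    (h2 : ∀ n : ℤ, z * β n * F (n - 1) + α n * H n - G n + G (n - 1) = 0)
    (h3 : ∀ n : ℤ, -F n + z * F (n - 1) + α n * (G n + G (n - 1)) = 0)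
    (hF : ∀ n : ℤ, F n ≠ 0) (w : ℂ)
    (hw : ∀ n : ℤ, w ^ 2 = G n ^ 2 - F n * H n)
    (hφ : ∀ n : ℤ, phiP F G w n ≠ 0)
    (hzα : ∀ n : ℤ, z + α n * phiP F G w (n - 1) ≠ 0)
    (n₀ : ℤ) :
    (∀ n : ℤ, psi2 α β F G w z n₀ n = phiP F G w n * psi1 α F G w z n₀ n)
    ∧ (∀ n : ℤ,
        Matrix.mulVec !![z, α n; β n * z, 1]
            ![psi1 α F G w z n₀ (n - 1), psi2 α β F G w z n₀ (n - 1)]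
          = ![psi1 α F G w z n₀ n, psi2 α β F G w z n₀ n])
    ∧ (∀ n : ℤ,
        Matrix.mulVec
            (Complex.I • !![G (n - 1), -(F (n - 1)); H (n - 1), -(G (n - 1))])
            ![psi1 α F G w z n₀ (n - 1), psi2 α β F G w z n₀ (n - 1)]
          = (-(Complex.I * w)) •
              ![psi1 α F G w z n₀ (n - 1), psi2 α β F G w z n₀ (n - 1)]) := by
  have riccati n := phiP_riccati (hF n) (hF (n - 1)) (h2 n) (h3 n) (hw n)
  have hψ₁ n : psi1 α F G w z n₀ n = psi1 α F G w z n₀ (n - 1) * (z + α n * phiP F G w (n - 1)) :=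
    prodZ_eq_mul _ n₀ n (hzα n)
  have riccati' n : phiP F G w (n - 1) * (z * β n * (phiP F G w (n - 1))⁻¹ + 1)
      = phiP F G w n * (z + α n * phiP F G w (n - 1)) := by
    rw [← riccati n]
    field_simp [hφ (n - 1)]
  have hstep n : z * β n * (phiP F G w (n - 1))⁻¹ + 1 ≠ 0 := by
    intro h
    exact mul_ne_zero (hφ n) (hzα n) (by rw [← riccati' n, h, mul_zero])
  have hψ : ∀ n, psi2 α β F G w z n₀ n = phiP F G w n * psi1 α F G w z n₀ n := by
    refine congrFun (eq_of_eq_mul_recurrence hstep (fun n => ?_) (fun n => ?_) n₀ ?_)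
    · rw [psi2, psi2, prodZ_eq_mul _ n₀ n (hstep n)]
      ring
    · rw [hψ₁ n]
      linear_combination -psi1 α F G w z n₀ (n - 1) * riccati' n
    · simp [psi1, psi2, prodZ]
  refine ⟨hψ, fun n => ?_, fun n => ?_⟩
  · rw [hψ (n - 1), hψ n, hψ₁ n, Matrix.mulVec_fin_two]
    simp only [Matrix.of_apply, Matrix.cons_val', Matrix.cons_val_zero, Matrix.cons_val_one,
      Matrix.empty_val', Matrix.cons_val_fin_one]
    refine Matrix.vec2_eq (by ring) ?_
    linear_combination psi1 α F G w z n₀ (n - 1) * riccati n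
  · rw [hψ (n - 1)]
    exact mulVec_eigenvector_phiP (hF (n - 1)) (hw (n - 1)) _

/-- Basic properties of the Baker–Akhiezer vector `Ψ = (ψ₁, ψ₂)ᵀ`:
`ψ₂ = φ ψ₁`, `U Ψ⁻ = Ψ`, and `V Ψ⁻ = −i w Ψ⁻`. -/
theorem baker_akhiezer_properties (z : ℂ) (hz : z ≠ 0) (α β F G H : ℤ → ℂ)
    (h1 : ∀ n : ℤ, z * (G (n - 1) - G n) + z * β n * F n + α n * H (n - 1) = 0)
    (h2 : ∀ n : ℤ, z * β n * F (n - 1) + α n * H n - G n + G (n - 1) = 0)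
    (h3 : ∀ n : ℤ, -F n + z * F (n - 1) + α n * (G n + G (n - 1)) = 0)
    (h4 : ∀ n : ℤ, z * β n * (G n + G (n - 1)) - z * H n + H (n - 1) = 0)
    (hF : ∀ n : ℤ, F n ≠ 0) (w : ℂ)
    (hw : ∀ n : ℤ, w ^ 2 = G n ^ 2 - F n * H n)
    (hφ : ∀ n : ℤ, phiP F G w n ≠ 0)
    (hzα : ∀ n : ℤ, z + α n * phiP F G w (n - 1) ≠ 0)
    (n₀ : ℤ) :
    (∀ n : ℤ, psi2 α β F G w z n₀ n = phiP F G w n * psi1 α F G w z n₀ n)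
    ∧ (∀ n : ℤ,
        Matrix.mulVec !![z, α n; β n * z, 1]
            ![psi1 α F G w z n₀ (n - 1), psi2 α β F G w z n₀ (n - 1)]
          = ![psi1 α F G w z n₀ n, psi2 α β F G w z n₀ n])
    ∧ (∀ n : ℤ,
        Matrix.mulVec
            (Complex.I • !![G (n - 1), -(F (n - 1)); H (n - 1), -(G (n - 1))])
            ![psi1 α F G w z n₀ (n - 1), psi2 α β F G w z n₀ (n - 1)]
          = (-(Complex.I * w)) •
              ![psi1 α F G w z n₀ (n - 1), psi2 α β F G w z n₀ (n - 1)]) :=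
  baker_akhiezer_properties_general z α β F G H h2 h3 hF w hw hφ hzα n₀
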